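/- Let m_h ∈ ℝ²∖{0}, n₃ ∈ ℝ, and let Û(-m_h, n₃/2), Û(m_h, n₃/2) ∈ ℂ⁴ be arbitrary vectors. Define U^{±,l}(p) = ⟨Û(p), e±(p)⟩_{ℂ⁴} · e±^l(p) for l-th components. Then the quantity β⁺ = U^{+,3}(-m_h, n₃/2)·U^{-,h}(m_h, n₃/2) + U^{-,3}(m_h, n₃/2)·U^{+,h}(-m_h, n₃/2) vanishes identically (as a vector in ℂ²). -/

import Mathlib

open Complex

/-- The eigenvector `e₊(p)` of the symbol, `p = (p₁,p₂,p₃) ∈ ℝ³` with `p_h ≠ 0`. -/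
noncomputable def epvec (p₁ p₂ p₃ : ℝ) : Fin 4 → ℂ :=
  fun i => ((1 / Real.sqrt 2 : ℝ) : ℂ) *
    ![Complex.I * ((p₁ * p₃ / (Real.sqrt (p₁ ^ 2 + p₂ ^ 2) *
        Real.sqrt (p₁ ^ 2 + p₂ ^ 2 + p₃ ^ 2)) : ℝ) : ℂ),
      Complex.I * ((p₂ * p₃ / (Real.sqrt (p₁ ^ 2 + p₂ ^ 2) *
        Real.sqrt (p₁ ^ 2 + p₂ ^ 2 + p₃ ^ 2)) : ℝ) : ℂ),
      -Complex.I * ((Real.sqrt (p₁ ^ 2 + p₂ ^ 2) /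
        Real.sqrt (p₁ ^ 2 + p₂ ^ 2 + p₃ ^ 2) : ℝ) : ℂ),
      1] i

/-- The eigenvector `e₋(p)` of the symbol. -/
noncomputable def emvec (p₁ p₂ p₃ : ℝ) : Fin 4 → ℂ :=
  fun i => ((1 / Real.sqrt 2 : ℝ) : ℂ) *
    ![-Complex.I * ((p₁ * p₃ / (Real.sqrt (p₁ ^ 2 + p₂ ^ 2) *
        Real.sqrt (p₁ ^ 2 + p₂ ^ 2 + p₃ ^ 2)) : ℝ) : ℂ),
      -Complex.I * ((p₂ * p₃ / (Real.sqrt (p₁ ^ 2 + p₂ ^ 2) *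
        Real.sqrt (p₁ ^ 2 + p₂ ^ 2 + p₃ ^ 2)) : ℝ) : ℂ),
      Complex.I * ((Real.sqrt (p₁ ^ 2 + p₂ ^ 2) /
        Real.sqrt (p₁ ^ 2 + p₂ ^ 2 + p₃ ^ 2) : ℝ) : ℂ),
      1] i

/-- The Hermitian pairing `⟨x, e⟩_{ℂ⁴}` (conjugation on the second entry). -/
noncomputable def pair4 (x e : Fin 4 → ℂ) : ℂ :=
  ∑ i : Fin 4, x i * (starRingEnd ℂ) (e i)

theorem epvec_neg_neg_of_horizontal (p₁ p₂ p₃ : ℝ) {j : Fin 4} (hj : j = 0 ∨ j = 1) :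
    epvec (-p₁) (-p₂) p₃ j = emvec p₁ p₂ p₃ j := by
  rcases hj with rfl | rfl <;>
    simp [epvec, emvec, neg_div]

theorem epvec_neg_neg_two (p₁ p₂ p₃ : ℝ) :
    epvec (-p₁) (-p₂) p₃ 2 = -emvec p₁ p₂ p₃ 2 := by
  simp [epvec, emvec]

theorem beta_plus_vanishes_general (m₁ m₂ n₃ : ℝ)
    (A B : Fin 4 → ℂ) :
    ∀ j : Fin 4, j = 0 ∨ j = 1 →
      (pair4 A (epvec (-m₁) (-m₂) (n₃ / 2)) * epvec (-m₁) (-m₂) (n₃ / 2) 2) *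
        (pair4 B (emvec m₁ m₂ (n₃ / 2)) * emvec m₁ m₂ (n₃ / 2) j) +
      (pair4 B (emvec m₁ m₂ (n₃ / 2)) * emvec m₁ m₂ (n₃ / 2) 2) *
        (pair4 A (epvec (-m₁) (-m₂) (n₃ / 2)) * epvec (-m₁) (-m₂) (n₃ / 2) j) = 0 := by
  intro j hj
  -- `e₊(-m_h, ·)` agrees with `e₋(m_h, ·)` horizontally but is `-e₋` vertically: the two products cancel.
  rw [epvec_neg_neg_two, epvec_neg_neg_of_horizontal _ _ _ hj]
  ring

/-- with `A = Û(-m_h, n₃/2)` and `B = Û(m_h, n₃/2)` arbitrary vectors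
in `ℂ⁴`, the quantity
`β⁺ = U^{+,3}(-m_h,n₃/2)·U^{-,h}(m_h,n₃/2) + U^{-,3}(m_h,n₃/2)·U^{+,h}(-m_h,n₃/2)`
vanishes identically (both horizontal components), where
`U^{a,l}(p) = ⟨Û(p), e_a(p)⟩ e_a^l(p)`. -/
theorem beta_plus_vanishes (m₁ m₂ n₃ : ℝ) (hm : (m₁, m₂) ≠ (0, 0))
    (A B : Fin 4 → ℂ) :
    ∀ j : Fin 4, j = 0 ∨ j = 1 →
      (pair4 A (epvec (-m₁) (-m₂) (n₃ / 2)) * epvec (-m₁) (-m₂) (n₃ / 2) 2) *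
        (pair4 B (emvec m₁ m₂ (n₃ / 2)) * emvec m₁ m₂ (n₃ / 2) j) +
      (pair4 B (emvec m₁ m₂ (n₃ / 2)) * emvec m₁ m₂ (n₃ / 2) 2) *
        (pair4 A (epvec (-m₁) (-m₂) (n₃ / 2)) * epvec (-m₁) (-m₂) (n₃ / 2) j) = 0 :=
  beta_plus_vanishes_general m₁ m₂ n₃ A B
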